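/- Let A be a bialgebra and M₁, M₂ tetramodules over A. Then M₁ ⊗_k M₂ equipped with a·(m₁⊠m₂) = (Δ¹(a)·m₁)⊠(Δ²(a)·m₂), (m₁⊠m₂)·a = (m₁·Δ¹(a))⊠(m₂·Δ²(a)), Δ_ℓ(m₁⊠m₂) = Δ_ℓ¹(m₁) ⊗ (Δ_ℓ²(m₁)⊠m₂), and Δ_r(m₁⊠m₂) = (m₁⊠Δ_r¹(m₂)) ⊗ Δ_r²(m₂) is a tetramodule over A (the second external product M₁ ⊠₂ M₂). -/
import Mathlib


open TensorProduct LinearMap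

universe u

namespace TetraPaper

variable (k : Type u) [Field k] (A : Type u) [Ring A] [Bialgebra k A]

/-- The multiplication of `A` as a linear map. -/
noncomputable abbrev mulMap : A ⊗[k] A →ₗ[k] A := LinearMap.mul' k A
/-- The comultiplication of `A`. -/
noncomputable abbrev comulMap : A →ₗ[k] A ⊗[k] A := Coalgebra.comul
/-- The counit of `A`. -/
noncomputable abbrev counitMap : A →ₗ[k] k := Coalgebra.counit

/-- A tetramodule (Bernstein–Khovanova) over the bialgebra `A`:
an `A`-bimodule and `A`-bicomodule structure on `M` satisfying the
compatibilities (4.10)–(4.13) of the paper. -/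
structure TetraStruct (M : Type u) [AddCommGroup M] [Module k M] : Type u where
  ml : A ⊗[k] M →ₗ[k] M
  mr : M ⊗[k] A →ₗ[k] M
  dl : M →ₗ[k] A ⊗[k] M
  dr : M →ₗ[k] M ⊗[k] A
  ml_assoc : ml ∘ₗ rTensor M (mulMap k A) =
    ml ∘ₗ lTensor A ml ∘ₗ (TensorProduct.assoc k A A M).toLinearMap
  ml_one : ∀ m : M, ml ((1 : A) ⊗ₜ[k] m) = m
  mr_assoc : mr ∘ₗ lTensor M (mulMap k A) ∘ₗ (TensorProduct.assoc k M A A).toLinearMap =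
    mr ∘ₗ rTensor A mr
  mr_one : ∀ m : M, mr (m ⊗ₜ[k] (1 : A)) = m
  ml_mr : ml ∘ₗ lTensor A mr ∘ₗ (TensorProduct.assoc k A M A).toLinearMap =
    mr ∘ₗ rTensor A ml
  dl_coassoc : lTensor A dl ∘ₗ dl =
    (TensorProduct.assoc k A A M).toLinearMap ∘ₗ rTensor M (comulMap k A) ∘ₗ dl
  dl_counit : ∀ m : M, TensorProduct.lid k M (rTensor M (counitMap k A) (dl m)) = m
  dr_coassoc : (TensorProduct.assoc k M A A).symm.toLinearMap ∘ₗ lTensor M (comulMap k A) ∘ₗ dr =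
    rTensor A dr ∘ₗ dr
  dr_counit : ∀ m : M, TensorProduct.rid k M (lTensor M (counitMap k A) (dr m)) = m
  dl_dr : lTensor A dr ∘ₗ dl =
    (TensorProduct.assoc k A M A).toLinearMap ∘ₗ rTensor A dl ∘ₗ dr
  compat_ll : dl ∘ₗ ml = TensorProduct.map (mulMap k A) ml ∘ₗ
    (tensorTensorTensorComm k A A A M).toLinearMap ∘ₗ TensorProduct.map (comulMap k A) dl
  compat_lr : dl ∘ₗ mr = TensorProduct.map (mulMap k A) mr ∘ₗ
    (tensorTensorTensorComm k A M A A).toLinearMap ∘ₗ TensorProduct.map dl (comulMap k A)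
  compat_rl : dr ∘ₗ ml = TensorProduct.map ml (mulMap k A) ∘ₗ
    (tensorTensorTensorComm k A A M A).toLinearMap ∘ₗ TensorProduct.map (comulMap k A) dr
  compat_rr : dr ∘ₗ mr = TensorProduct.map mr (mulMap k A) ∘ₗ
    (tensorTensorTensorComm k M A A A).toLinearMap ∘ₗ TensorProduct.map dr (comulMap k A)

variable {k A}

/-- Morphisms of tetramodules. -/
def IsTetraHom {M N : Type u} [AddCommGroup M] [Module k M] [AddCommGroup N] [Module k N]
    (T₁ : TetraStruct k A M) (T₂ : TetraStruct k A N) (f : M →ₗ[k] N) : Prop :=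
  f ∘ₗ T₁.ml = T₂.ml ∘ₗ lTensor A f ∧
  f ∘ₗ T₁.mr = T₂.mr ∘ₗ rTensor A f ∧
  T₂.dl ∘ₗ f = lTensor A f ∘ₗ T₁.dl ∧
  T₂.dr ∘ₗ f = rTensor A f ∘ₗ T₁.dr

end TetraPaper
namespace TetraPaper

variable {k : Type u} [Field k] {A : Type u} [Ring A] [Bialgebra k A]

section combinators

variable (k A)
variable (X Y : Type u) [AddCommGroup X] [Module k X] [AddCommGroup Y] [Module k Y]

/-- Left action of the first external product `⊠₁`: `a·(x⊠y) = (a·x)⊠y`. -/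
noncomputable def b1ml (mlX : A ⊗[k] X →ₗ[k] X) : A ⊗[k] (X ⊗[k] Y) →ₗ[k] X ⊗[k] Y :=
  rTensor Y mlX ∘ₗ (TensorProduct.assoc k A X Y).symm.toLinearMap

/-- Right action of `⊠₁`: `(x⊠y)·a = x⊠(y·a)`. -/
noncomputable def b1mr (mrY : Y ⊗[k] A →ₗ[k] Y) : (X ⊗[k] Y) ⊗[k] A →ₗ[k] X ⊗[k] Y :=
  lTensor X mrY ∘ₗ (TensorProduct.assoc k X Y A).toLinearMap

/-- Left coaction of `⊠₁`: `Δℓ(x⊠y) = (Δℓ¹x * Δℓ¹y) ⊗ (Δℓ²x ⊠ Δℓ²y)`. -/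
noncomputable def b1dl (dlX : X →ₗ[k] A ⊗[k] X) (dlY : Y →ₗ[k] A ⊗[k] Y) :
    X ⊗[k] Y →ₗ[k] A ⊗[k] (X ⊗[k] Y) :=
  TensorProduct.map (mulMap k A) LinearMap.id ∘ₗ
    (tensorTensorTensorComm k A X A Y).toLinearMap ∘ₗ TensorProduct.map dlX dlY

/-- Right coaction of `⊠₁`: `Δr(x⊠y) = (Δr¹x ⊠ Δr¹y) ⊗ (Δr²x * Δr²y)`. -/
noncomputable def b1dr (drX : X →ₗ[k] X ⊗[k] A) (drY : Y →ₗ[k] Y ⊗[k] A) :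
    X ⊗[k] Y →ₗ[k] (X ⊗[k] Y) ⊗[k] A :=
  TensorProduct.map LinearMap.id (mulMap k A) ∘ₗ
    (tensorTensorTensorComm k X A Y A).toLinearMap ∘ₗ TensorProduct.map drX drY

/-- Left action of the second external product `⊠₂`: `a·(x⊠y) = (Δ¹a·x)⊠(Δ²a·y)`. -/
noncomputable def b2ml (mlX : A ⊗[k] X →ₗ[k] X) (mlY : A ⊗[k] Y →ₗ[k] Y) :
    A ⊗[k] (X ⊗[k] Y) →ₗ[k] X ⊗[k] Y :=
  TensorProduct.map mlX mlY ∘ₗ (tensorTensorTensorComm k A A X Y).toLinearMap ∘ₗ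
    rTensor (X ⊗[k] Y) (comulMap k A)

/-- Right action of `⊠₂`: `(x⊠y)·a = (x·Δ¹a)⊠(y·Δ²a)`. -/
noncomputable def b2mr (mrX : X ⊗[k] A →ₗ[k] X) (mrY : Y ⊗[k] A →ₗ[k] Y) :
    (X ⊗[k] Y) ⊗[k] A →ₗ[k] X ⊗[k] Y :=
  TensorProduct.map mrX mrY ∘ₗ (tensorTensorTensorComm k X Y A A).toLinearMap ∘ₗ
    lTensor (X ⊗[k] Y) (comulMap k A)

/-- Left coaction of `⊠₂`: `Δℓ(x⊠y) = Δℓ¹(x) ⊗ (Δℓ²x ⊠ y)`. -/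
noncomputable def b2dl (dlX : X →ₗ[k] A ⊗[k] X) : X ⊗[k] Y →ₗ[k] A ⊗[k] (X ⊗[k] Y) :=
  (TensorProduct.assoc k A X Y).toLinearMap ∘ₗ rTensor Y dlX

/-- Right coaction of `⊠₂`: `Δr(x⊠y) = (x ⊠ Δr¹y) ⊗ Δr²(y)`. -/
noncomputable def b2dr (drY : Y →ₗ[k] Y ⊗[k] A) : X ⊗[k] Y →ₗ[k] (X ⊗[k] Y) ⊗[k] A :=
  (TensorProduct.assoc k X Y A).symm.toLinearMap ∘ₗ lTensor X drY

end combinators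

end TetraPaper
namespace TetraPaper

variable {k : Type u} [Field k] {A : Type u} [Ring A] [Bialgebra k A]
variable {M₁ M₂ : Type u} [AddCommGroup M₁] [Module k M₁] [AddCommGroup M₂] [Module k M₂]

section PointwiseAux

variable {M : Type u} [AddCommGroup M] [Module k M] (T : TetraStruct k A M)

lemma ml_mul (a b : A) (m : M) :
    T.ml ((a * b) ⊗ₜ[k] m) = T.ml (a ⊗ₜ[k] T.ml (b ⊗ₜ[k] m)) := by
  simpa using LinearMap.congr_fun T.ml_assoc ((a ⊗ₜ[k] b) ⊗ₜ[k] m)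

lemma mr_mul (a b : A) (m : M) :
    T.mr (m ⊗ₜ[k] (a * b)) = T.mr (T.mr (m ⊗ₜ[k] a) ⊗ₜ[k] b) := by
  simpa using LinearMap.congr_fun T.mr_assoc ((m ⊗ₜ[k] a) ⊗ₜ[k] b)

lemma ml_mr_apply (a b : A) (m : M) :
    T.ml (a ⊗ₜ[k] T.mr (m ⊗ₜ[k] b)) = T.mr (T.ml (a ⊗ₜ[k] m) ⊗ₜ[k] b) := by
  simpa using LinearMap.congr_fun T.ml_mr ((a ⊗ₜ[k] m) ⊗ₜ[k] b)

lemma dl_coassoc_apply (m : M) :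
    lTensor A T.dl (T.dl m) =
      (TensorProduct.assoc k A A M) (rTensor M (comulMap k A) (T.dl m)) := by
  simpa using LinearMap.congr_fun T.dl_coassoc m

lemma dr_coassoc_apply (m : M) :
    (TensorProduct.assoc k M A A).symm (lTensor M (comulMap k A) (T.dr m)) =
      rTensor A T.dr (T.dr m) := by
  simpa using LinearMap.congr_fun T.dr_coassoc m

lemma dl_dr_apply (m : M) :
    lTensor A T.dr (T.dl m) =
      (TensorProduct.assoc k A M A) (rTensor A T.dl (T.dr m)) := by
  simpa using LinearMap.congr_fun T.dl_dr m

lemma dl_ml_apply (a : A) (m : M) :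
    T.dl (T.ml (a ⊗ₜ[k] m)) = TensorProduct.map (mulMap k A) T.ml
      (tensorTensorTensorComm k A A A M (comulMap k A a ⊗ₜ[k] T.dl m)) := by
  simpa using LinearMap.congr_fun T.compat_ll (a ⊗ₜ[k] m)

lemma dl_mr_apply (a : A) (m : M) :
    T.dl (T.mr (m ⊗ₜ[k] a)) = TensorProduct.map (mulMap k A) T.mr
      (tensorTensorTensorComm k A M A A (T.dl m ⊗ₜ[k] comulMap k A a)) := by
  simpa using LinearMap.congr_fun T.compat_lr (m ⊗ₜ[k] a)

lemma dr_ml_apply (a : A) (m : M) :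
    T.dr (T.ml (a ⊗ₜ[k] m)) = TensorProduct.map T.ml (mulMap k A)
      (tensorTensorTensorComm k A A M A (comulMap k A a ⊗ₜ[k] T.dr m)) := by
  simpa using LinearMap.congr_fun T.compat_rl (a ⊗ₜ[k] m)

lemma dr_mr_apply (a : A) (m : M) :
    T.dr (T.mr (m ⊗ₜ[k] a)) = TensorProduct.map T.mr (mulMap k A)
      (tensorTensorTensorComm k M A A A (T.dr m ⊗ₜ[k] comulMap k A a)) := by
  simpa using LinearMap.congr_fun T.compat_rr (m ⊗ₜ[k] a)

lemma coassocP (a : A) :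
    rTensor A (comulMap k A) (comulMap k A a) =
      (TensorProduct.assoc k A A A).symm (lTensor A (comulMap k A) (comulMap k A a)) :=
  (Coalgebra.coassoc_symm_apply a).symm

end PointwiseAux

variable (T₁ : TetraStruct k A M₁) (T₂ : TetraStruct k A M₂)

/-- The diagonal left action of `A ⊗ A` on `M₁ ⊗ M₂`. -/
noncomputable def actL : (A ⊗[k] A) ⊗[k] (M₁ ⊗[k] M₂) →ₗ[k] M₁ ⊗[k] M₂ :=
  TensorProduct.map T₁.ml T₂.ml ∘ₗ (tensorTensorTensorComm k A A M₁ M₂).toLinearMap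

/-- The diagonal right action of `A ⊗ A` on `M₁ ⊗ M₂`. -/
noncomputable def ractL : (M₁ ⊗[k] M₂) ⊗[k] (A ⊗[k] A) →ₗ[k] M₁ ⊗[k] M₂ :=
  TensorProduct.map T₁.mr T₂.mr ∘ₗ (tensorTensorTensorComm k M₁ M₂ A A).toLinearMap

@[simp] lemma actL_tmul (a b : A) (x : M₁) (y : M₂) :
    actL T₁ T₂ ((a ⊗ₜ[k] b) ⊗ₜ[k] (x ⊗ₜ[k] y)) = T₁.ml (a ⊗ₜ[k] x) ⊗ₜ[k] T₂.ml (b ⊗ₜ[k] y) := by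
  simp [actL]

@[simp] lemma ractL_tmul (a b : A) (x : M₁) (y : M₂) :
    ractL T₁ T₂ ((x ⊗ₜ[k] y) ⊗ₜ[k] (a ⊗ₜ[k] b)) = T₁.mr (x ⊗ₜ[k] a) ⊗ₜ[k] T₂.mr (y ⊗ₜ[k] b) := by
  simp [ractL]

lemma b2ml_apply (a : A) (m : M₁ ⊗[k] M₂) :
    b2ml k A M₁ M₂ T₁.ml T₂.ml (a ⊗ₜ[k] m) = actL T₁ T₂ (comulMap k A a ⊗ₜ[k] m) := by
  simp [b2ml, actL]

lemma b2mr_apply (m : M₁ ⊗[k] M₂) (a : A) :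
    b2mr k A M₁ M₂ T₁.mr T₂.mr (m ⊗ₜ[k] a) = ractL T₁ T₂ (m ⊗ₜ[k] comulMap k A a) := by
  simp [b2mr, ractL]

lemma b2dl_apply (x : M₁) (y : M₂) :
    b2dl k A M₁ M₂ T₁.dl (x ⊗ₜ[k] y) =
      TensorProduct.assoc k A M₁ M₂ (T₁.dl x ⊗ₜ[k] y) := by
  simp [b2dl]

lemma b2dr_apply (x : M₁) (y : M₂) :
    b2dr k A M₁ M₂ T₂.dr (x ⊗ₜ[k] y) =
      (TensorProduct.assoc k M₁ M₂ A).symm (x ⊗ₜ[k] T₂.dr y) := by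
  simp [b2dr]

lemma actL_mul (s t : A ⊗[k] A) (m : M₁ ⊗[k] M₂) :
    actL T₁ T₂ ((s * t) ⊗ₜ[k] m) = actL T₁ T₂ (s ⊗ₜ[k] actL T₁ T₂ (t ⊗ₜ[k] m)) := by
  induction s using TensorProduct.induction_on with
  | zero => simp
  | add s₁ s₂ h₁ h₂ => simp [add_mul, add_tmul, h₁, h₂]
  | tmul a₁ a₂ =>
    induction t using TensorProduct.induction_on with
    | zero => simp
    | add t₁ t₂ h₁ h₂ => simp [mul_add, add_tmul, tmul_add, h₁, h₂]
    | tmul b₁ b₂ =>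
      induction m using TensorProduct.induction_on with
      | zero => simp
      | add m₁ m₂ h₁ h₂ =>
        simp only [Algebra.TensorProduct.tmul_mul_tmul] at h₁ h₂
        simp [tmul_add, h₁, h₂]
      | tmul x y => simp [Algebra.TensorProduct.tmul_mul_tmul, ml_mul]

lemma ractL_mul (s t : A ⊗[k] A) (m : M₁ ⊗[k] M₂) :
    ractL T₁ T₂ (m ⊗ₜ[k] (s * t)) = ractL T₁ T₂ (ractL T₁ T₂ (m ⊗ₜ[k] s) ⊗ₜ[k] t) := by
  induction s using TensorProduct.induction_on with
  | zero => simp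
  | add s₁ s₂ h₁ h₂ => simp [add_mul, add_tmul, tmul_add, h₁, h₂]
  | tmul a₁ a₂ =>
    induction t using TensorProduct.induction_on with
    | zero => simp
    | add t₁ t₂ h₁ h₂ => simp [mul_add, add_tmul, tmul_add, h₁, h₂]
    | tmul b₁ b₂ =>
      induction m using TensorProduct.induction_on with
      | zero => simp
      | add m₁ m₂ h₁ h₂ =>
        simp only [Algebra.TensorProduct.tmul_mul_tmul] at h₁ h₂
        simp [tmul_add, add_tmul, h₁, h₂]
      | tmul x y => simp [Algebra.TensorProduct.tmul_mul_tmul, mr_mul]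

lemma actL_one (m : M₁ ⊗[k] M₂) : actL T₁ T₂ ((1 : A ⊗[k] A) ⊗ₜ[k] m) = m := by
  induction m using TensorProduct.induction_on with
  | zero => simp
  | add m₁ m₂ h₁ h₂ => simp [tmul_add, h₁, h₂]
  | tmul x y => simp [Algebra.TensorProduct.one_def, T₁.ml_one, T₂.ml_one]

lemma ractL_one (m : M₁ ⊗[k] M₂) : ractL T₁ T₂ (m ⊗ₜ[k] (1 : A ⊗[k] A)) = m := by
  induction m using TensorProduct.induction_on with
  | zero => simp
  | add m₁ m₂ h₁ h₂ => simp [add_tmul, h₁, h₂]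
  | tmul x y => simp [Algebra.TensorProduct.one_def, T₁.mr_one, T₂.mr_one]

lemma actL_ractL_comm (s t : A ⊗[k] A) (m : M₁ ⊗[k] M₂) :
    actL T₁ T₂ (s ⊗ₜ[k] ractL T₁ T₂ (m ⊗ₜ[k] t)) =
      ractL T₁ T₂ (actL T₁ T₂ (s ⊗ₜ[k] m) ⊗ₜ[k] t) := by
  induction s using TensorProduct.induction_on with
  | zero => simp
  | add s₁ s₂ h₁ h₂ => simp [add_tmul, h₁, h₂]
  | tmul a₁ a₂ =>
    induction t using TensorProduct.induction_on with
    | zero => simp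
    | add t₁ t₂ h₁ h₂ => simp [add_tmul, tmul_add, h₁, h₂]
    | tmul b₁ b₂ =>
      induction m using TensorProduct.induction_on with
      | zero => simp
      | add m₁ m₂ h₁ h₂ => simp [tmul_add, add_tmul, h₁, h₂]
      | tmul x y => simp [ml_mr_apply]

/-- Reassociation gadget for the left coassociativity proof. -/
noncomputable def gXi : (A ⊗[k] (A ⊗[k] M₁)) ⊗[k] M₂ →ₗ[k] A ⊗[k] (A ⊗[k] (M₁ ⊗[k] M₂)) :=
  lTensor A (TensorProduct.assoc k A M₁ M₂).toLinearMap ∘ₗ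
    (TensorProduct.assoc k A (A ⊗[k] M₁) M₂).toLinearMap

@[simp] lemma gXi_tmul (b c : A) (x : M₁) (y : M₂) :
    gXi ((b ⊗ₜ[k] (c ⊗ₜ[k] x)) ⊗ₜ[k] y) = b ⊗ₜ[k] (c ⊗ₜ[k] (x ⊗ₜ[k] y)) := by
  simp [gXi]

/-- Reassociation gadget for the right coassociativity proof. -/
noncomputable def gXi' : M₁ ⊗[k] ((M₂ ⊗[k] A) ⊗[k] A) →ₗ[k] ((M₁ ⊗[k] M₂) ⊗[k] A) ⊗[k] A :=
  rTensor A (TensorProduct.assoc k M₁ M₂ A).symm.toLinearMap ∘ₗ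
    (TensorProduct.assoc k M₁ (M₂ ⊗[k] A) A).symm.toLinearMap

@[simp] lemma gXi'_tmul (x : M₁) (y : M₂) (c c' : A) :
    gXi' (x ⊗ₜ[k] ((y ⊗ₜ[k] c) ⊗ₜ[k] c')) = ((x ⊗ₜ[k] y) ⊗ₜ[k] c) ⊗ₜ[k] c' := by
  simp [gXi']

/-- Reassociation gadget for the `dl`–`dr` compatibility proof. -/
noncomputable def gGam : (A ⊗[k] M₁) ⊗[k] (M₂ ⊗[k] A) →ₗ[k] A ⊗[k] ((M₁ ⊗[k] M₂) ⊗[k] A) :=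
  lTensor A (TensorProduct.assoc k M₁ M₂ A).symm.toLinearMap ∘ₗ
    (TensorProduct.assoc k A M₁ (M₂ ⊗[k] A)).toLinearMap

@[simp] lemma gGam_tmul (b : A) (x : M₁) (y : M₂) (c : A) :
    gGam ((b ⊗ₜ[k] x) ⊗ₜ[k] (y ⊗ₜ[k] c)) = b ⊗ₜ[k] ((x ⊗ₜ[k] y) ⊗ₜ[k] c) := by
  simp [gGam]

/-- Gadget for the `compat_ll` proof. -/
noncomputable def gll : ((A ⊗[k] A) ⊗[k] A) ⊗[k] ((A ⊗[k] M₁) ⊗[k] M₂) →ₗ[k]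
    A ⊗[k] (M₁ ⊗[k] M₂) :=
  TensorProduct.map (mulMap k A) (TensorProduct.map T₁.ml T₂.ml) ∘ₗ
    (TensorProduct.assoc k (A ⊗[k] A) (A ⊗[k] M₁) (A ⊗[k] M₂)).toLinearMap ∘ₗ
    rTensor (A ⊗[k] M₂) (tensorTensorTensorComm k A A A M₁).toLinearMap ∘ₗ
    (tensorTensorTensorComm k (A ⊗[k] A) A (A ⊗[k] M₁) M₂).toLinearMap

@[simp] lemma gll_tmul (b₁ b₂ b₃ c : A) (x : M₁) (y : M₂) :
    gll T₁ T₂ (((b₁ ⊗ₜ[k] b₂) ⊗ₜ[k] b₃) ⊗ₜ[k] ((c ⊗ₜ[k] x) ⊗ₜ[k] y)) =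
      (b₁ * c) ⊗ₜ[k] (T₁.ml (b₂ ⊗ₜ[k] x) ⊗ₜ[k] T₂.ml (b₃ ⊗ₜ[k] y)) := by
  simp [gll]

/-- Gadget for the `compat_lr` proof. -/
noncomputable def glr : ((A ⊗[k] M₁) ⊗[k] M₂) ⊗[k] ((A ⊗[k] A) ⊗[k] A) →ₗ[k]
    A ⊗[k] (M₁ ⊗[k] M₂) :=
  TensorProduct.map (mulMap k A) (TensorProduct.map T₁.mr T₂.mr) ∘ₗ
    (TensorProduct.assoc k (A ⊗[k] A) (M₁ ⊗[k] A) (M₂ ⊗[k] A)).toLinearMap ∘ₗ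
    rTensor (M₂ ⊗[k] A) (tensorTensorTensorComm k A M₁ A A).toLinearMap ∘ₗ
    (tensorTensorTensorComm k (A ⊗[k] M₁) M₂ (A ⊗[k] A) A).toLinearMap

@[simp] lemma glr_tmul (c : A) (x : M₁) (y : M₂) (b₁ b₂ b₃ : A) :
    glr T₁ T₂ (((c ⊗ₜ[k] x) ⊗ₜ[k] y) ⊗ₜ[k] ((b₁ ⊗ₜ[k] b₂) ⊗ₜ[k] b₃)) =
      (c * b₁) ⊗ₜ[k] (T₁.mr (x ⊗ₜ[k] b₂) ⊗ₜ[k] T₂.mr (y ⊗ₜ[k] b₃)) := by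
  simp [glr]

/-- Gadget for the `compat_rl` proof. -/
noncomputable def grl : ((A ⊗[k] A) ⊗[k] A) ⊗[k] (M₁ ⊗[k] (M₂ ⊗[k] A)) →ₗ[k]
    (M₁ ⊗[k] M₂) ⊗[k] A :=
  rTensor A (TensorProduct.map T₁.ml T₂.ml) ∘ₗ
    TensorProduct.map (tensorTensorTensorComm k A A M₁ M₂).toLinearMap (mulMap k A) ∘ₗ
    (tensorTensorTensorComm k (A ⊗[k] A) A (M₁ ⊗[k] M₂) A).toLinearMap ∘ₗ
    lTensor ((A ⊗[k] A) ⊗[k] A) (TensorProduct.assoc k M₁ M₂ A).symm.toLinearMap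

@[simp] lemma grl_tmul (b₁ b₂ b₃ : A) (x : M₁) (y : M₂) (c : A) :
    grl T₁ T₂ (((b₁ ⊗ₜ[k] b₂) ⊗ₜ[k] b₃) ⊗ₜ[k] (x ⊗ₜ[k] (y ⊗ₜ[k] c))) =
      (T₁.ml (b₁ ⊗ₜ[k] x) ⊗ₜ[k] T₂.ml (b₂ ⊗ₜ[k] y)) ⊗ₜ[k] (b₃ * c) := by
  simp [grl]

/-- Gadget for the `compat_rr` proof. -/
noncomputable def grr : (M₁ ⊗[k] (M₂ ⊗[k] A)) ⊗[k] ((A ⊗[k] A) ⊗[k] A) →ₗ[k]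
    (M₁ ⊗[k] M₂) ⊗[k] A :=
  rTensor A (TensorProduct.map T₁.mr T₂.mr) ∘ₗ
    TensorProduct.map (tensorTensorTensorComm k M₁ M₂ A A).toLinearMap (mulMap k A) ∘ₗ
    (tensorTensorTensorComm k (M₁ ⊗[k] M₂) A (A ⊗[k] A) A).toLinearMap ∘ₗ
    rTensor ((A ⊗[k] A) ⊗[k] A) (TensorProduct.assoc k M₁ M₂ A).symm.toLinearMap

@[simp] lemma grr_tmul (x : M₁) (y : M₂) (c : A) (b₁ b₂ b₃ : A) :
    grr T₁ T₂ ((x ⊗ₜ[k] (y ⊗ₜ[k] c)) ⊗ₜ[k] ((b₁ ⊗ₜ[k] b₂) ⊗ₜ[k] b₃)) =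
      (T₁.mr (x ⊗ₜ[k] b₁) ⊗ₜ[k] T₂.mr (y ⊗ₜ[k] b₂)) ⊗ₜ[k] (c * b₃) := by
  simp [grr]

section Big
set_option maxHeartbeats 1000000
set_option synthInstance.maxHeartbeats 400000

lemma L_ll_1 (t : A ⊗[k] A) (x : M₁) (y : M₂) :
    b2dl k A M₁ M₂ T₁.dl (actL T₁ T₂ (t ⊗ₜ[k] (x ⊗ₜ[k] y))) =
      gll T₁ T₂ (rTensor A (comulMap k A) t ⊗ₜ[k] (T₁.dl x ⊗ₜ[k] y)) := by
  induction t using TensorProduct.induction_on with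
  | zero => simp
  | add t₁ t₂ h₁ h₂ => simp [add_tmul, h₁, h₂]
  | tmul a₁ a₂ =>
    rw [actL_tmul, b2dl_apply, dl_ml_apply, rTensor_tmul]
    generalize comulMap k A a₁ = s
    generalize T₁.dl x = u
    induction s using TensorProduct.induction_on with
    | zero => simp
    | add s₁ s₂ h₁ h₂ => simp [add_tmul, tmul_add, h₁, h₂]
    | tmul c₁ c₂ =>
      induction u using TensorProduct.induction_on with
      | zero => simp
      | add u₁ u₂ h₁ h₂ => simp [add_tmul, tmul_add, h₁, h₂]
      | tmul d x' => simp [mulMap]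

lemma L_ll_2 (t : A ⊗[k] A) (x : M₁) (y : M₂) :
    TensorProduct.map (mulMap k A) (b2ml k A M₁ M₂ T₁.ml T₂.ml)
        (tensorTensorTensorComm k A A A (M₁ ⊗[k] M₂)
          (t ⊗ₜ[k] b2dl k A M₁ M₂ T₁.dl (x ⊗ₜ[k] y))) =
      gll T₁ T₂ ((TensorProduct.assoc k A A A).symm (lTensor A (comulMap k A) t) ⊗ₜ[k]
        (T₁.dl x ⊗ₜ[k] y)) := by
  rw [b2dl_apply]
  generalize T₁.dl x = u
  induction t using TensorProduct.induction_on with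
  | zero => simp
  | add t₁ t₂ h₁ h₂ => simp [add_tmul, h₁, h₂]
  | tmul a₁ a₂ =>
    rw [lTensor_tmul]
    induction u using TensorProduct.induction_on with
    | zero => simp
    | add u₁ u₂ h₁ h₂ => simp [add_tmul, tmul_add, h₁, h₂]
    | tmul d x' =>
      rw [TensorProduct.assoc_tmul, tensorTensorTensorComm_tmul, TensorProduct.map_tmul,
        b2ml_apply]
      simp only [mulMap, LinearMap.mul'_apply]
      generalize comulMap k A a₂ = s
      induction s using TensorProduct.induction_on with
      | zero => simp
      | add s₁ s₂ h₁ h₂ => simp [add_tmul, tmul_add, h₁, h₂]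
      | tmul c₁ c₂ => simp [mulMap]

lemma L_lr_1 (t : A ⊗[k] A) (x : M₁) (y : M₂) :
    b2dl k A M₁ M₂ T₁.dl (ractL T₁ T₂ ((x ⊗ₜ[k] y) ⊗ₜ[k] t)) =
      glr T₁ T₂ ((T₁.dl x ⊗ₜ[k] y) ⊗ₜ[k] rTensor A (comulMap k A) t) := by
  induction t using TensorProduct.induction_on with
  | zero => simp
  | add t₁ t₂ h₁ h₂ => simp [tmul_add, h₁, h₂]
  | tmul a₁ a₂ =>
    rw [ractL_tmul, b2dl_apply, dl_mr_apply, rTensor_tmul]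
    generalize comulMap k A a₁ = s
    generalize T₁.dl x = u
    induction s using TensorProduct.induction_on with
    | zero => simp
    | add s₁ s₂ h₁ h₂ => simp [add_tmul, tmul_add, h₁, h₂]
    | tmul c₁ c₂ =>
      induction u using TensorProduct.induction_on with
      | zero => simp
      | add u₁ u₂ h₁ h₂ => simp [add_tmul, tmul_add, h₁, h₂]
      | tmul d x' => simp [mulMap]

lemma L_lr_2 (t : A ⊗[k] A) (x : M₁) (y : M₂) :
    TensorProduct.map (mulMap k A) (b2mr k A M₁ M₂ T₁.mr T₂.mr)
        (tensorTensorTensorComm k A (M₁ ⊗[k] M₂) A A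
          (b2dl k A M₁ M₂ T₁.dl (x ⊗ₜ[k] y) ⊗ₜ[k] t)) =
      glr T₁ T₂ ((T₁.dl x ⊗ₜ[k] y) ⊗ₜ[k]
        (TensorProduct.assoc k A A A).symm (lTensor A (comulMap k A) t)) := by
  rw [b2dl_apply]
  generalize T₁.dl x = u
  induction t using TensorProduct.induction_on with
  | zero => simp
  | add t₁ t₂ h₁ h₂ => simp [tmul_add, h₁, h₂]
  | tmul a₁ a₂ =>
    rw [lTensor_tmul]
    induction u using TensorProduct.induction_on with
    | zero => simp
    | add u₁ u₂ h₁ h₂ => simp [add_tmul, tmul_add, h₁, h₂]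
    | tmul d x' =>
      rw [TensorProduct.assoc_tmul, tensorTensorTensorComm_tmul, TensorProduct.map_tmul,
        b2mr_apply]
      simp only [mulMap, LinearMap.mul'_apply]
      generalize comulMap k A a₂ = s
      induction s using TensorProduct.induction_on with
      | zero => simp
      | add s₁ s₂ h₁ h₂ => simp [add_tmul, tmul_add, h₁, h₂]
      | tmul c₁ c₂ => simp [mulMap]

lemma L_rl_1 (t : A ⊗[k] A) (x : M₁) (y : M₂) :
    b2dr k A M₁ M₂ T₂.dr (actL T₁ T₂ (t ⊗ₜ[k] (x ⊗ₜ[k] y))) =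
      grl T₁ T₂ ((TensorProduct.assoc k A A A).symm (lTensor A (comulMap k A) t) ⊗ₜ[k]
        (x ⊗ₜ[k] T₂.dr y)) := by
  induction t using TensorProduct.induction_on with
  | zero => simp
  | add t₁ t₂ h₁ h₂ => simp [add_tmul, h₁, h₂]
  | tmul a₁ a₂ =>
    rw [actL_tmul, b2dr_apply, dr_ml_apply, lTensor_tmul]
    generalize comulMap k A a₂ = s
    generalize T₂.dr y = v
    induction s using TensorProduct.induction_on with
    | zero => simp
    | add s₁ s₂ h₁ h₂ => simp [add_tmul, tmul_add, h₁, h₂]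
    | tmul c₁ c₂ =>
      induction v using TensorProduct.induction_on with
      | zero => simp
      | add v₁ v₂ h₁ h₂ => simp [add_tmul, tmul_add, h₁, h₂]
      | tmul y' c => simp [mulMap]

lemma L_rl_2 (t : A ⊗[k] A) (x : M₁) (y : M₂) :
    TensorProduct.map (b2ml k A M₁ M₂ T₁.ml T₂.ml) (mulMap k A)
        (tensorTensorTensorComm k A A (M₁ ⊗[k] M₂) A
          (t ⊗ₜ[k] b2dr k A M₁ M₂ T₂.dr (x ⊗ₜ[k] y))) =
      grl T₁ T₂ (rTensor A (comulMap k A) t ⊗ₜ[k] (x ⊗ₜ[k] T₂.dr y)) := by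
  rw [b2dr_apply]
  generalize T₂.dr y = v
  induction t using TensorProduct.induction_on with
  | zero => simp
  | add t₁ t₂ h₁ h₂ => simp [add_tmul, h₁, h₂]
  | tmul a₁ a₂ =>
    rw [rTensor_tmul]
    induction v using TensorProduct.induction_on with
    | zero => simp
    | add v₁ v₂ h₁ h₂ => simp [add_tmul, tmul_add, h₁, h₂]
    | tmul y' c =>
      rw [TensorProduct.assoc_symm_tmul, tensorTensorTensorComm_tmul, TensorProduct.map_tmul,
        b2ml_apply]
      simp only [mulMap, LinearMap.mul'_apply]
      generalize comulMap k A a₁ = s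
      induction s using TensorProduct.induction_on with
      | zero => simp
      | add s₁ s₂ h₁ h₂ => simp [add_tmul, tmul_add, h₁, h₂]
      | tmul c₁ c₂ => simp [mulMap]

lemma L_rr_1 (t : A ⊗[k] A) (x : M₁) (y : M₂) :
    b2dr k A M₁ M₂ T₂.dr (ractL T₁ T₂ ((x ⊗ₜ[k] y) ⊗ₜ[k] t)) =
      grr T₁ T₂ ((x ⊗ₜ[k] T₂.dr y) ⊗ₜ[k]
        (TensorProduct.assoc k A A A).symm (lTensor A (comulMap k A) t)) := by
  induction t using TensorProduct.induction_on with
  | zero => simp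
  | add t₁ t₂ h₁ h₂ => simp [tmul_add, h₁, h₂]
  | tmul a₁ a₂ =>
    rw [ractL_tmul, b2dr_apply, dr_mr_apply, lTensor_tmul]
    generalize comulMap k A a₂ = s
    generalize T₂.dr y = v
    induction s using TensorProduct.induction_on with
    | zero => simp
    | add s₁ s₂ h₁ h₂ => simp [add_tmul, tmul_add, h₁, h₂]
    | tmul c₁ c₂ =>
      induction v using TensorProduct.induction_on with
      | zero => simp
      | add v₁ v₂ h₁ h₂ => simp [add_tmul, tmul_add, h₁, h₂]
      | tmul y' c => simp [mulMap]

lemma L_rr_2 (t : A ⊗[k] A) (x : M₁) (y : M₂) :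
    TensorProduct.map (b2mr k A M₁ M₂ T₁.mr T₂.mr) (mulMap k A)
        (tensorTensorTensorComm k (M₁ ⊗[k] M₂) A A A
          (b2dr k A M₁ M₂ T₂.dr (x ⊗ₜ[k] y) ⊗ₜ[k] t)) =
      grr T₁ T₂ ((x ⊗ₜ[k] T₂.dr y) ⊗ₜ[k] rTensor A (comulMap k A) t) := by
  rw [b2dr_apply]
  generalize T₂.dr y = v
  induction t using TensorProduct.induction_on with
  | zero => simp
  | add t₁ t₂ h₁ h₂ => simp [tmul_add, h₁, h₂]
  | tmul a₁ a₂ =>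
    rw [rTensor_tmul]
    induction v using TensorProduct.induction_on with
    | zero => simp
    | add v₁ v₂ h₁ h₂ => simp [add_tmul, tmul_add, h₁, h₂]
    | tmul y' c =>
      rw [TensorProduct.assoc_symm_tmul, tensorTensorTensorComm_tmul, TensorProduct.map_tmul,
        b2mr_apply]
      simp only [mulMap, LinearMap.mul'_apply]
      generalize comulMap k A a₁ = s
      induction s using TensorProduct.induction_on with
      | zero => simp
      | add s₁ s₂ h₁ h₂ => simp [add_tmul, tmul_add, h₁, h₂]
      | tmul c₁ c₂ => simp [mulMap]

end Big

lemma C1 (u : A ⊗[k] M₁) (y : M₂) :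
    lTensor A (b2dl k A M₁ M₂ T₁.dl) (TensorProduct.assoc k A M₁ M₂ (u ⊗ₜ[k] y)) =
      gXi (lTensor A T₁.dl u ⊗ₜ[k] y) := by
  induction u using TensorProduct.induction_on with
  | zero => simp
  | add u₁ u₂ h₁ h₂ => simp [add_tmul, h₁, h₂]
  | tmul b x' =>
    rw [TensorProduct.assoc_tmul, lTensor_tmul, b2dl_apply, lTensor_tmul]
    generalize T₁.dl x' = w
    induction w using TensorProduct.induction_on with
    | zero => simp
    | add w₁ w₂ h₁ h₂ => simp [add_tmul, tmul_add, h₁, h₂]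
    | tmul c x'' => simp

lemma C2 (u : A ⊗[k] M₁) (y : M₂) :
    TensorProduct.assoc k A A (M₁ ⊗[k] M₂)
        (rTensor (M₁ ⊗[k] M₂) (comulMap k A) (TensorProduct.assoc k A M₁ M₂ (u ⊗ₜ[k] y))) =
      gXi (TensorProduct.assoc k A A M₁ (rTensor M₁ (comulMap k A) u) ⊗ₜ[k] y) := by
  induction u using TensorProduct.induction_on with
  | zero => simp
  | add u₁ u₂ h₁ h₂ => simp [add_tmul, h₁, h₂]
  | tmul b x' =>
    rw [TensorProduct.assoc_tmul, rTensor_tmul, rTensor_tmul]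
    generalize comulMap k A b = s
    induction s using TensorProduct.induction_on with
    | zero => simp
    | add s₁ s₂ h₁ h₂ => simp [add_tmul, tmul_add, h₁, h₂]
    | tmul c₁ c₂ => simp

lemma D1 (x : M₁) (v : M₂ ⊗[k] A) :
    rTensor A (b2dr k A M₁ M₂ T₂.dr) ((TensorProduct.assoc k M₁ M₂ A).symm (x ⊗ₜ[k] v)) =
      gXi' (x ⊗ₜ[k] rTensor A T₂.dr v) := by
  induction v using TensorProduct.induction_on with
  | zero => simp
  | add v₁ v₂ h₁ h₂ => simp [tmul_add, h₁, h₂]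
  | tmul y' c =>
    rw [TensorProduct.assoc_symm_tmul, rTensor_tmul, b2dr_apply, rTensor_tmul]
    generalize T₂.dr y' = w
    induction w using TensorProduct.induction_on with
    | zero => simp
    | add w₁ w₂ h₁ h₂ => simp [add_tmul, tmul_add, h₁, h₂]
    | tmul y'' d => simp

lemma D2 (x : M₁) (v : M₂ ⊗[k] A) :
    (TensorProduct.assoc k (M₁ ⊗[k] M₂) A A).symm
        (lTensor (M₁ ⊗[k] M₂) (comulMap k A) ((TensorProduct.assoc k M₁ M₂ A).symm (x ⊗ₜ[k] v))) =
      gXi' (x ⊗ₜ[k] (TensorProduct.assoc k M₂ A A).symm (lTensor M₂ (comulMap k A) v)) := by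
  induction v using TensorProduct.induction_on with
  | zero => simp
  | add v₁ v₂ h₁ h₂ => simp [tmul_add, h₁, h₂]
  | tmul y' c =>
    rw [TensorProduct.assoc_symm_tmul, lTensor_tmul, lTensor_tmul]
    generalize comulMap k A c = s
    induction s using TensorProduct.induction_on with
    | zero => simp
    | add s₁ s₂ h₁ h₂ => simp [add_tmul, tmul_add, h₁, h₂]
    | tmul c₁ c₂ => simp

lemma G1 (u : A ⊗[k] M₁) (y : M₂) :
    lTensor A (b2dr k A M₁ M₂ T₂.dr) (TensorProduct.assoc k A M₁ M₂ (u ⊗ₜ[k] y)) =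
      gGam (u ⊗ₜ[k] T₂.dr y) := by
  induction u using TensorProduct.induction_on with
  | zero => simp
  | add u₁ u₂ h₁ h₂ => simp [add_tmul, h₁, h₂]
  | tmul b x' =>
    rw [TensorProduct.assoc_tmul, lTensor_tmul, b2dr_apply]
    generalize T₂.dr y = v
    induction v using TensorProduct.induction_on with
    | zero => simp
    | add v₁ v₂ h₁ h₂ => simp [add_tmul, tmul_add, h₁, h₂]
    | tmul y' c => simp

lemma G2 (x : M₁) (v : M₂ ⊗[k] A) :
    TensorProduct.assoc k A (M₁ ⊗[k] M₂) A
        (rTensor A (b2dl k A M₁ M₂ T₁.dl) ((TensorProduct.assoc k M₁ M₂ A).symm (x ⊗ₜ[k] v))) =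
      gGam (T₁.dl x ⊗ₜ[k] v) := by
  induction v using TensorProduct.induction_on with
  | zero => simp
  | add v₁ v₂ h₁ h₂ => simp [tmul_add, h₁, h₂]
  | tmul y' c =>
    rw [TensorProduct.assoc_symm_tmul, rTensor_tmul, b2dl_apply]
    generalize T₁.dl x = u
    induction u using TensorProduct.induction_on with
    | zero => simp
    | add u₁ u₂ h₁ h₂ => simp [add_tmul, tmul_add, h₁, h₂]
    | tmul b x' => simp

lemma CU1 (u : A ⊗[k] M₁) (y : M₂) :
    TensorProduct.lid k (M₁ ⊗[k] M₂)
        (rTensor (M₁ ⊗[k] M₂) (counitMap k A) (TensorProduct.assoc k A M₁ M₂ (u ⊗ₜ[k] y))) =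
      TensorProduct.lid k M₁ (rTensor M₁ (counitMap k A) u) ⊗ₜ[k] y := by
  induction u using TensorProduct.induction_on with
  | zero => simp
  | add u₁ u₂ h₁ h₂ => simp [add_tmul, h₁, h₂]
  | tmul b x' => simp [smul_tmul']

lemma CU2 (x : M₁) (v : M₂ ⊗[k] A) :
    TensorProduct.rid k (M₁ ⊗[k] M₂)
        (lTensor (M₁ ⊗[k] M₂) (counitMap k A) ((TensorProduct.assoc k M₁ M₂ A).symm (x ⊗ₜ[k] v))) =
      x ⊗ₜ[k] TensorProduct.rid k M₂ (lTensor M₂ (counitMap k A) v) := by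
  induction v using TensorProduct.induction_on with
  | zero => simp
  | add v₁ v₂ h₁ h₂ => simp [tmul_add, h₁, h₂]
  | tmul y' c => simp [tmul_smul]

set_option maxHeartbeats 1000000 in
/-- The second external product tetramodule structure on `M₁ ⊗ M₂`. -/
noncomputable def boxt2 : TetraStruct k A (M₁ ⊗[k] M₂) where
  ml := b2ml k A M₁ M₂ T₁.ml T₂.ml
  mr := b2mr k A M₁ M₂ T₁.mr T₂.mr
  dl := b2dl k A M₁ M₂ T₁.dl
  dr := b2dr k A M₁ M₂ T₂.dr
  ml_assoc := by
    apply TensorProduct.ext'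
    intro p m
    simp only [LinearMap.comp_apply, LinearEquiv.coe_coe]
    induction p using TensorProduct.induction_on with
    | zero => simp
    | add p₁ p₂ h₁ h₂ =>
      simp only [rTensor_tmul, TensorProduct.assoc_tmul, lTensor_tmul] at h₁ h₂
      simp [add_tmul, h₁, h₂]
    | tmul a b =>
      rw [rTensor_tmul, TensorProduct.assoc_tmul, lTensor_tmul]
      simp only [mulMap, LinearMap.mul'_apply]
      rw [b2ml_apply, b2ml_apply, b2ml_apply,
        show comulMap k A (a * b) = comulMap k A a * comulMap k A b from
          Bialgebra.comul_mul (R := k) a b,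
        actL_mul]
  ml_one := by
    intro m
    rw [b2ml_apply, show comulMap k A (1 : A) = 1 from Bialgebra.comul_one (R := k) (A := A), actL_one]
  mr_assoc := by
    apply TensorProduct.ext'
    intro p c
    simp only [LinearMap.comp_apply, LinearEquiv.coe_coe]
    induction p using TensorProduct.induction_on with
    | zero => simp
    | add p₁ p₂ h₁ h₂ =>
      simp only [rTensor_tmul, TensorProduct.assoc_tmul, lTensor_tmul] at h₁ h₂
      simp [add_tmul, h₁, h₂]
    | tmul m b =>
      rw [TensorProduct.assoc_tmul, lTensor_tmul, rTensor_tmul]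
      simp only [mulMap, LinearMap.mul'_apply]
      rw [b2mr_apply, b2mr_apply, b2mr_apply,
        show comulMap k A (b * c) = comulMap k A b * comulMap k A c from
          Bialgebra.comul_mul (R := k) b c,
        ractL_mul]
  mr_one := by
    intro m
    rw [b2mr_apply, show comulMap k A (1 : A) = 1 from Bialgebra.comul_one (R := k) (A := A), ractL_one]
  ml_mr := by
    apply TensorProduct.ext'
    intro p b
    simp only [LinearMap.comp_apply, LinearEquiv.coe_coe]
    induction p using TensorProduct.induction_on with
    | zero => simp
    | add p₁ p₂ h₁ h₂ =>
      simp only [rTensor_tmul, TensorProduct.assoc_tmul, lTensor_tmul] at h₁ h₂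
      simp [add_tmul, h₁, h₂]
    | tmul a m =>
      rw [TensorProduct.assoc_tmul, lTensor_tmul, rTensor_tmul, b2mr_apply, b2ml_apply,
        b2ml_apply, b2mr_apply, actL_ractL_comm]
  dl_coassoc := by
    apply TensorProduct.ext'
    intro x y
    simp only [LinearMap.comp_apply, LinearEquiv.coe_coe]
    rw [b2dl_apply, C1, C2, dl_coassoc_apply]
  dl_counit := by
    intro m
    induction m using TensorProduct.induction_on with
    | zero => simp
    | add m₁ m₂ h₁ h₂ => simp [h₁, h₂]
    | tmul x y => rw [b2dl_apply, CU1, T₁.dl_counit]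
  dr_coassoc := by
    apply TensorProduct.ext'
    intro x y
    simp only [LinearMap.comp_apply, LinearEquiv.coe_coe]
    rw [b2dr_apply, D1, D2, dr_coassoc_apply]
  dr_counit := by
    intro m
    induction m using TensorProduct.induction_on with
    | zero => simp
    | add m₁ m₂ h₁ h₂ => simp [h₁, h₂]
    | tmul x y => rw [b2dr_apply, CU2, T₂.dr_counit]
  dl_dr := by
    apply TensorProduct.ext'
    intro x y
    simp only [LinearMap.comp_apply, LinearEquiv.coe_coe]
    rw [b2dl_apply, b2dr_apply, G1, G2]
  compat_ll := by
    apply TensorProduct.ext'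
    intro a m
    simp only [LinearMap.comp_apply, LinearEquiv.coe_coe]
    induction m using TensorProduct.induction_on with
    | zero => simp
    | add m₁ m₂ h₁ h₂ => simp [tmul_add, h₁, h₂]
    | tmul x y =>
      rw [TensorProduct.map_tmul, b2ml_apply, L_ll_1, L_ll_2, coassocP]
  compat_lr := by
    apply TensorProduct.ext'
    intro m a
    simp only [LinearMap.comp_apply, LinearEquiv.coe_coe]
    induction m using TensorProduct.induction_on with
    | zero => simp
    | add m₁ m₂ h₁ h₂ => simp [add_tmul, h₁, h₂]
    | tmul x y =>
      rw [TensorProduct.map_tmul, b2mr_apply, L_lr_1, L_lr_2, coassocP]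
  compat_rl := by
    apply TensorProduct.ext'
    intro a m
    simp only [LinearMap.comp_apply, LinearEquiv.coe_coe]
    induction m using TensorProduct.induction_on with
    | zero => simp
    | add m₁ m₂ h₁ h₂ => simp [tmul_add, h₁, h₂]
    | tmul x y =>
      rw [TensorProduct.map_tmul, b2ml_apply, L_rl_1, L_rl_2, coassocP]
  compat_rr := by
    apply TensorProduct.ext'
    intro m a
    simp only [LinearMap.comp_apply, LinearEquiv.coe_coe]
    induction m using TensorProduct.induction_on with
    | zero => simp
    | add m₁ m₂ h₁ h₂ => simp [add_tmul, h₁, h₂]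
    | tmul x y =>
      rw [TensorProduct.map_tmul, b2mr_apply, L_rr_1, L_rr_2, coassocP]

/-- For tetramodules `M₁, M₂` over `A`, the vector space
`M₁ ⊗ₖ M₂` equipped with the diagonal actions `a·(m₁⊠m₂) = (Δ¹a·m₁)⊠(Δ²a·m₂)`,
`(m₁⊠m₂)·a = (m₁·Δ¹a)⊠(m₂·Δ²a)` and the outer coactions
`Δℓ(m₁⊠m₂) = Δℓ¹(m₁) ⊗ (Δℓ²m₁ ⊠ m₂)`, `Δr(m₁⊠m₂) = (m₁ ⊠ Δr¹m₂) ⊗ Δr²(m₂)`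
is again a tetramodule (the second external product `M₁ ⊠₂ M₂`). -/
theorem boxt2_isTetra (T₁ : TetraStruct k A M₁) (T₂ : TetraStruct k A M₂) :
    ∃ T : TetraStruct k A (M₁ ⊗[k] M₂),
      T.ml = b2ml k A M₁ M₂ T₁.ml T₂.ml ∧
      T.mr = b2mr k A M₁ M₂ T₁.mr T₂.mr ∧
      T.dl = b2dl k A M₁ M₂ T₁.dl ∧
      T.dr = b2dr k A M₁ M₂ T₂.dr :=
  ⟨boxt2 T₁ T₂, rfl, rfl, rfl, rfl⟩

end TetraPaper
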